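/- Let random vectors ĝ^(l) ∈ ℝ^{d_l}, l = 1..L, with E[‖ĝ^(l)‖²] finite, and let the clipped estimator be g̃^(l) = min(1/(K·p_l), C)·N_l·ĝ^(l) where N_l is the count of layer l in K draws with replacement with probabilities p_l (independent of ĝ given the state). Then E[‖g̃‖²] ≤ (C+1)·∑_{l=1}^L E[‖ĝ^(l)‖²] = (C+1)·E[‖ĝ‖²]. -/

import Mathlib

open MeasureTheory ProbabilityTheory

/-!
By independence, each block factors as `E[‖w N ĝ‖²] = w² E[N²] E[‖ĝ‖²]`. With `a = K p` and the
clipped weight `w = min (1/a) C`, the binomial second moment gives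
`w² E[N²] ≤ w² (a + a²) = w (w a) + (w a)² ≤ C + 1`, since `w ≤ C` and `w a ≤ 1`.
Summing over the blocks gives the bound.
-/

theorem integral_norm_smul_sq_eq_mul_of_indepFun {Ω E : Type*} [MeasurableSpace Ω] {μ : Measure Ω}
    [NormedAddCommGroup E] [NormedSpace ℝ E] [MeasurableSpace E] [BorelSpace E]
    {X : Ω → ℝ} {Y : Ω → E} (hXY : IndepFun X Y μ) (hX : AEMeasurable X μ)
    (hY : AEMeasurable Y μ) :
    ∫ ω, ‖X ω • Y ω‖ ^ 2 ∂μ = (∫ ω, X ω ^ 2 ∂μ) * ∫ ω, ‖Y ω‖ ^ 2 ∂μ := by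
  simp_rw [norm_smul, mul_pow, Real.norm_eq_abs, sq_abs]
  exact hXY.integral_fun_comp_mul_comp (f := fun x => x ^ 2) (g := fun y => ‖y‖ ^ 2) hX hY
    (by fun_prop) (by fun_prop)

theorem sq_mul_add_sq_le_add_one {m a : ℝ} (hm : 0 ≤ m) (ha : 0 ≤ a) (hma : m * a ≤ 1) :
    m ^ 2 * (a + a ^ 2) ≤ m + 1 := by
  nlinarith [mul_nonneg hm ha]

theorem min_one_div_mul_le_one {a : ℝ} (C : ℝ) (ha : 0 ≤ a) : min (1 / a) C * a ≤ 1 := by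
  rcases ha.eq_or_lt with rfl | ha
  · simp
  · calc min (1 / a) C * a ≤ 1 / a * a := by gcongr; exact min_le_left _ _
      _ = 1 := one_div_mul_cancel ha.ne'

theorem min_one_div_sq_mul_le {a q C : ℝ} (ha : 0 ≤ a) (hq : 0 ≤ q) (hC : 0 ≤ C) :
    min (1 / a) C ^ 2 * (a * (1 - q) + a ^ 2) ≤ C + 1 := by
  set m := min (1 / a) C
  have hm : 0 ≤ m := le_min (by positivity) hC
  calc m ^ 2 * (a * (1 - q) + a ^ 2) ≤ m ^ 2 * (a + a ^ 2) := by gcongr; nlinarith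
    _ ≤ m + 1 := sq_mul_add_sq_le_add_one hm ha (min_one_div_mul_le_one C ha)
    _ ≤ C + 1 := by gcongr; exact min_le_right _ _

theorem clipped_blockwise_ipw_second_moment_general {Ω : Type*} [MeasurableSpace Ω]
    (μ : Measure Ω) (L : ℕ) (dim : Fin L → ℕ)
    (K : ℕ) (C : ℝ) (hC : 0 < C)
    (p : Fin L → ℝ) (hp : ∀ l, 0 < p l)
    (ghat : Ω → ∀ l, EuclideanSpace ℝ (Fin (dim l))) (N : Ω → Fin L → ℕ)
    (hmeasg : ∀ l, Measurable fun ω => ghat ω l) (hmeasN : Measurable N)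
    (hN2 : ∀ l, ∫ ω, (N ω l : ℝ) ^ 2 ∂μ
      = K * p l * (1 - p l) + ((K : ℝ) * p l) ^ 2)
    (hindep : ∀ l, IndepFun (fun ω => N ω l) (fun ω => ghat ω l) μ) :
    ∑ l, ∫ ω, ‖(min (1 / ((K : ℝ) * p l)) C * (N ω l : ℝ)) • ghat ω l‖ ^ 2 ∂μ
      ≤ (C + 1) * ∑ l, ∫ ω, ‖ghat ω l‖ ^ 2 ∂μ := by
  rw [Finset.mul_sum]
  gcongr with l
  set m := min (1 / ((K : ℝ) * p l)) C
  have hN : Measurable fun ω => (N ω l : ℝ) :=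
    measurable_from_top.comp ((measurable_pi_apply l).comp hmeasN)
  have hweighted : IndepFun (fun ω => m * N ω l) (fun ω => ghat ω l) μ :=
    (hindep l).comp (measurable_from_top (f := fun n : ℕ => m * n)) measurable_id
  calc ∫ ω, ‖(m * (N ω l : ℝ)) • ghat ω l‖ ^ 2 ∂μ
      = m ^ 2 * (∫ ω, (N ω l : ℝ) ^ 2 ∂μ) * ∫ ω, ‖ghat ω l‖ ^ 2 ∂μ := by
        rw [integral_norm_smul_sq_eq_mul_of_indepFun hweighted (hN.const_mul m).aemeasurable
          (hmeasg l).aemeasurable]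
        simp_rw [mul_pow, integral_const_mul]
    _ ≤ (C + 1) * ∫ ω, ‖ghat ω l‖ ^ 2 ∂μ := by
        gcongr
        rw [hN2 l]
        exact min_one_div_sq_mul_le (mul_nonneg K.cast_nonneg (hp l).le) (hp l).le hC.le

/-- Second-moment bound for the clipped block-wise IPW estimator:
with `g̃^(l) = min(1/(K·p_l), C)·N_l • ĝ^(l)`, where `N_l` has the binomial second moment
`E[N_l²] = K·p_l·(1−p_l) + (K·p_l)²` and is independent of `ĝ^(l)`,
`E[‖g̃‖²] ≤ (C+1)·∑_l E[‖ĝ^(l)‖²]`. -/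
theorem clipped_blockwise_ipw_second_moment {Ω : Type*} [MeasurableSpace Ω]
    (μ : Measure Ω) [IsProbabilityMeasure μ] (L : ℕ) (dim : Fin L → ℕ)
    (K : ℕ) (hK : 1 ≤ K) (C : ℝ) (hC : 0 < C)
    (p : Fin L → ℝ) (hp : ∀ l, 0 < p l) (hp1 : ∀ l, p l ≤ 1) (hpsum : ∑ l, p l = 1)
    (ghat : Ω → ∀ l, EuclideanSpace ℝ (Fin (dim l))) (N : Ω → Fin L → ℕ)
    (hmeasg : ∀ l, Measurable fun ω => ghat ω l) (hmeasN : Measurable N)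
    (hN2 : ∀ l, ∫ ω, (N ω l : ℝ) ^ 2 ∂μ
      = K * p l * (1 - p l) + ((K : ℝ) * p l) ^ 2)
    (hindep : ∀ l, IndepFun (fun ω => N ω l) (fun ω => ghat ω l) μ)
    (hint2 : ∀ l, Integrable (fun ω => ‖ghat ω l‖ ^ 2) μ)
    (hinth : ∀ l, Integrable
      (fun ω => ‖(min (1 / ((K : ℝ) * p l)) C * (N ω l : ℝ)) • ghat ω l‖ ^ 2) μ) :
    ∑ l, ∫ ω, ‖(min (1 / ((K : ℝ) * p l)) C * (N ω l : ℝ)) • ghat ω l‖ ^ 2 ∂μ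
      ≤ (C + 1) * ∑ l, ∫ ω, ‖ghat ω l‖ ^ 2 ∂μ :=
  clipped_blockwise_ipw_second_moment_general μ L dim K C hC p hp ghat N hmeasg hmeasN hN2 hindep
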